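/- With λ as above and σ the product of the k standard consecutive cycles of lengths m_1, ..., m_k, the map λ intertwines T_σ with the k-fold cyclic shift: λ(T_σ(a)) = T^k(λ(a)) for all a ∈ F_q^n, where T is the cyclic right shift on F_q^{m'k}. Consequently, if C is a σ-code of length n, then λ(C) is a quasi-cyclic code of length m'k and index k. -/
import Mathlib


/-- The replication-and-interleaving map `λ : F_q^n → F_q^{m' k}` (indices taken modularly):
position `x` of `λ a` carries coordinate `(x / k) mod (m i)` of block `i = x mod k`. -/
def lam {F : Type*} [Field F] {k : ℕ} (m : Fin k → ℕ) (hk : 0 < k)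
    (a : (Σ i : Fin k, ZMod (m i)) → F) : ZMod (Finset.univ.lcm m * k) → F := fun x =>
  let i : Fin k := ⟨x.val % k, Nat.mod_lt _ hk⟩
  a ⟨i, ((x.val / k : ℕ) : ZMod (m i))⟩

/-- With `σ` the product of the `k` disjoint cycles of lengths `m i` (so that
`T_σ (a) ⟨i, j⟩ = a ⟨i, j − 1⟩`) and `T` the cyclic right shift `(T b) x = b (x − 1)` on
`F_q^{m' k}`, the map `λ` intertwines `T_σ` with `T^k`: `λ (T_σ a) = T^k (λ a)`.
Consequently the image under `λ` of a σ-code of length `n` is a quasi-cyclic code of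
length `m' k` and index `k` (invariant under `T^k`). -/
theorem lam_intertwines_quasiCyclic {F : Type*} [Field F] [Fintype F] {k : ℕ}
    (m : Fin k → ℕ) (hm : ∀ i, 0 < m i) (hk : 0 < k)
    (Tσ : ((Σ i : Fin k, ZMod (m i)) → F) → ((Σ i : Fin k, ZMod (m i)) → F))
    (hTσ : ∀ (a : (Σ i : Fin k, ZMod (m i)) → F) (i : Fin k) (j : ZMod (m i)),
        Tσ a ⟨i, j⟩ = a ⟨i, j - 1⟩)
    (T : (ZMod (Finset.univ.lcm m * k) → F) → (ZMod (Finset.univ.lcm m * k) → F))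
    (hT : ∀ (b : ZMod (Finset.univ.lcm m * k) → F) (x : ZMod (Finset.univ.lcm m * k)),
        T b x = b (x - 1)) :
    (∀ a : (Σ i : Fin k, ZMod (m i)) → F, lam m hk (Tσ a) = T^[k] (lam m hk a)) ∧
    (∀ C : Set ((Σ i : Fin k, ZMod (m i)) → F),
      (∀ a ∈ C, Tσ a ∈ C) → ∀ a ∈ C, T^[k] (lam m hk a) ∈ lam m hk '' C) := by
  classical
  have hm' : 0 < Finset.univ.lcm m := by
    rcases Nat.eq_zero_or_pos (Finset.univ.lcm m) with h | h
    · exfalso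
      rw [Finset.lcm_eq_zero_iff] at h
      obtain ⟨i, _, hi⟩ := h
      exact (hm i).ne' hi
    · exact h
  have hkN : k ≤ Finset.univ.lcm m * k := Nat.le_mul_of_pos_left k hm'
  have hN : 0 < Finset.univ.lcm m * k := Nat.mul_pos hm' hk
  haveI : NeZero (Finset.univ.lcm m * k) := ⟨hN.ne'⟩
  have hTiter : ∀ (n : ℕ) (b : ZMod (Finset.univ.lcm m * k) → F)
      (x : ZMod (Finset.univ.lcm m * k)), T^[n] b x = b (x - (n : ℕ)) := by
    intro n
    induction n with
    | zero => intro b x; simp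
    | succ n ih =>
      intro b x
      rw [Function.iterate_succ', Function.comp_apply, hT, ih]
      push_cast
      ring_nf
  have key : ∀ a : (Σ i : Fin k, ZMod (m i)) → F, lam m hk (Tσ a) = T^[k] (lam m hk a) := by
    intro a
    funext x
    rw [hTiter]
    show Tσ a ⟨⟨x.val % k, Nat.mod_lt _ hk⟩, ((x.val / k : ℕ) : ZMod (m _))⟩ =
      a ⟨⟨(x - (k:ℕ)).val % k, Nat.mod_lt _ hk⟩, (((x - (k:ℕ)).val / k : ℕ) : ZMod (m _))⟩
    rw [hTσ]
    have hv : x.val < Finset.univ.lcm m * k := ZMod.val_lt x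
    have hxk : (x - (k:ℕ) : ZMod (Finset.univ.lcm m * k)) =
        ((x.val + Finset.univ.lcm m * k - k : ℕ) : ZMod (Finset.univ.lcm m * k)) := by
      rw [Nat.cast_sub (by omega : k ≤ x.val + Finset.univ.lcm m * k), Nat.cast_add,
        ZMod.natCast_self, add_zero, ZMod.natCast_val, ZMod.cast_id]
    rcases le_or_gt k x.val with hkv | hkv
    · -- x.val ≥ k
      have hval : (x - (k:ℕ) : ZMod (Finset.univ.lcm m * k)).val = x.val - k := by
        rw [hxk, show x.val + Finset.univ.lcm m * k - k = (x.val - k) + Finset.univ.lcm m * k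
          by omega]
        rw [Nat.cast_add, ZMod.natCast_self, add_zero, ZMod.val_cast_of_lt (by omega)]
      rw [hval]
      have hmod : (x.val - k) % k = x.val % k := by
        conv_rhs => rw [show x.val = (x.val - k) + k by omega]
        rw [Nat.add_mod_right]
      have hdiv : (x.val - k) / k = x.val / k - 1 := by
        have h := Nat.add_div_right (x.val - k) hk
        rw [Nat.sub_add_cancel hkv] at h
        rw [h, Nat.add_sub_cancel]
      have h1le : 1 ≤ x.val / k := Nat.one_le_div_iff hk |>.mpr hkv
      have hfin : (⟨(x.val - k) % k, Nat.mod_lt _ hk⟩ : Fin k)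
          = ⟨x.val % k, Nat.mod_lt _ hk⟩ := Fin.ext hmod
      rw [hfin]
      congr 1
      rw [hdiv, Nat.cast_sub h1le, Nat.cast_one]
    · -- x.val < k
      have hsub : (Finset.univ.lcm m - 1) * k = Finset.univ.lcm m * k - k := by
        rw [Nat.sub_one_mul]
      have hval : (x - (k:ℕ) : ZMod (Finset.univ.lcm m * k)).val
          = x.val + (Finset.univ.lcm m - 1) * k := by
        rw [hxk, show x.val + Finset.univ.lcm m * k - k
          = x.val + (Finset.univ.lcm m - 1) * k by rw [hsub]; omega]
        rw [ZMod.val_cast_of_lt (by rw [hsub]; omega)]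
      rw [hval]
      have hmod : (x.val + (Finset.univ.lcm m - 1) * k) % k = x.val % k := by
        rw [Nat.add_mul_mod_self_right]
      have hdiv : (x.val + (Finset.univ.lcm m - 1) * k) / k = Finset.univ.lcm m - 1 := by
        rw [Nat.add_mul_div_right _ _ hk, Nat.div_eq_of_lt hkv, zero_add]
      have hvdiv : x.val / k = 0 := Nat.div_eq_of_lt hkv
      have hfin : (⟨(x.val + (Finset.univ.lcm m - 1) * k) % k, Nat.mod_lt _ hk⟩ : Fin k)
          = ⟨x.val % k, Nat.mod_lt _ hk⟩ := Fin.ext hmod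
      rw [hfin]
      congr 1
      rw [hdiv, hvdiv, Nat.cast_sub hm', Nat.cast_one, Nat.cast_zero]
      have hdvd : (m ⟨x.val % k, Nat.mod_lt _ hk⟩ : ℕ) ∣ Finset.univ.lcm m :=
        Finset.dvd_lcm (Finset.mem_univ _)
      rw [(ZMod.natCast_eq_zero_iff _ _).mpr hdvd]
  refine ⟨key, ?_⟩
  intro C hC a ha
  exact ⟨Tσ a, hC a ha, key a⟩
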